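/- Let G be a graph of maximum degree at least 2 with γ_I(G) > γ(G), let H be a graph and v ∈ V(H). Then γ_I(G∘_v H) = n(G)·(γ_I(H) − 1) + γ(G) if and only if γ_I(H − {v}) = γ_I(H) − 1 and at least one of the following holds: (i) there exists a γ_I(H − {v})-function g with g(y) > 0 for some neighbour y of v in H; (ii) there exists a γ_I(H)-function h with h(v) = 2. -/

import Mathlib

open Finset

open scoped Classical

/-- An Italian dominating function on a finite simple graph: values in {0,1,2} and
every vertex with value 0 has neighbour values summing to at least 2. -/
noncomputable def IsIDF {α : Type*} [Fintype α] (G : SimpleGraph α) (f : α → ℕ) : Prop :=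
  (∀ u, f u ≤ 2) ∧
    ∀ u, f u = 0 → 2 ≤ ∑ w ∈ Finset.univ.filter (fun w => G.Adj u w), f w

/-- The Italian domination number γ_I(G). -/
noncomputable def italianNumber {α : Type*} [Fintype α] (G : SimpleGraph α) : ℕ :=
  sInf {n | ∃ f : α → ℕ, IsIDF G f ∧ ∑ u, f u = n}

/-- A γ_I(G)-function: an IDF on G of minimum weight. -/
noncomputable def IsMinIDF {α : Type*} [Fintype α] (G : SimpleGraph α) (f : α → ℕ) : Prop :=
  IsIDF G f ∧ ∑ u, f u = italianNumber G

/-- D is a dominating set of G. -/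
def IsDomSet {α : Type*} (G : SimpleGraph α) (D : Set α) : Prop :=
  ∀ u ∉ D, ∃ w ∈ D, G.Adj u w

/-- The domination number γ(G). -/
noncomputable def dominationNumber {α : Type*} [Fintype α] (G : SimpleGraph α) : ℕ :=
  sInf {n | ∃ D : Finset α, IsDomSet G ↑D ∧ D.card = n}

/-- The degree of a vertex. -/
noncomputable def deg {α : Type*} [Fintype α] (G : SimpleGraph α) (u : α) : ℕ :=
  (Finset.univ.filter (fun w => G.Adj u w)).card

/-- The rooted product G∘_v H: one copy of H for each vertex of G, the root v of the
x-th copy being identified with the vertex x of G. The pair (x, y) is the vertex y of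
the x-th copy of H; in particular (x, v) is the vertex x of G. -/
def rootedProd {α β : Type*} (G : SimpleGraph α) (H : SimpleGraph β) (v : β) :
    SimpleGraph (α × β) where
  Adj p q := (p.1 = q.1 ∧ H.Adj p.2 q.2) ∨ (p.2 = v ∧ q.2 = v ∧ G.Adj p.1 q.1)
  symm := by
    constructor
    rintro ⟨x, y⟩ ⟨x', y'⟩ (⟨h1, h2⟩ | ⟨h1, h2, h3⟩)
    · exact Or.inl ⟨h1.symm, h2.symm⟩
    · exact Or.inr ⟨h2, h1, h3.symm⟩
  loopless := by
    constructor
    rintro ⟨x, y⟩ (⟨_, h⟩ | ⟨_, _, h⟩)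
    · exact H.loopless.irrefl _ h
    · exact G.loopless.irrefl _ h

/-- The weight ω(f_x) of the restriction of f to the copy H_x. -/
def copyWeight {α β : Type*} [Fintype β] (f : α × β → ℕ) (x : α) : ℕ :=
  ∑ y, f (x, y)

/-- The graph H − {v} obtained from H by deleting the vertex v. -/
def deleteVertex {β : Type*} (H : SimpleGraph β) (v : β) : SimpleGraph {w : β // w ≠ v} :=
  SimpleGraph.induce {w : β | w ≠ v} H

/-!
Write `k = γ_I(H)`. An IDF of `G ∘_v H` restricts on every copy of `H` to a function that
satisfies the Italian condition away from the root, so each copy weighs at least `k - 1`, and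
at least `k` unless its root has value `0` and gets at most `1` from inside the copy. Such a
light root needs a positive neighbouring root, whose copy is heavy; so the heavy copies
dominate `G` and the weight is at least `n(G)(k - 1) + γ(G)`.

Conditions (i) and (ii) give IDFs attaining this bound over a minimum dominating set `D` of `G`:
a `γ_I(H - v)`-function on every copy, with value `1` on the roots in `D` for (i), or a
`γ_I(H)`-function with value `2` at the root on the copies over `D` for (ii). Conversely, in a
minimum IDF attaining the bound the heavy copies form a minimum dominating set and weigh exactly
`k`, and a light copy is a `γ_I(H - v)`-function of weight `k - 1`. If none of them witnesses
(i) or (ii), the indicator of the heavy copies is an IDF of `G` of weight `γ(G) < γ_I(G)`.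
-/
section Italian

variable {α : Type*} [Fintype α] (G : SimpleGraph α)

theorem isIDF_iff_sum_ite {f : α → ℕ} :
    IsIDF G f ↔ (∀ u, f u ≤ 2) ∧ ∀ u, f u = 0 → 2 ≤ ∑ w, if G.Adj u w then f w else 0 := by
  simp only [IsIDF, Finset.sum_filter]

theorem isIDF_const_one : IsIDF G fun _ => 1 :=
  ⟨fun _ => by norm_num, fun _ h => absurd h one_ne_zero⟩

theorem italianNumber_le {f : α → ℕ} (hf : IsIDF G f) : italianNumber G ≤ ∑ u, f u :=
  Nat.sInf_le ⟨f, hf, rfl⟩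

theorem italianNumber_le_card : italianNumber G ≤ Fintype.card α := by
  simpa using italianNumber_le G (isIDF_const_one G)

theorem exists_isMinIDF : ∃ f : α → ℕ, IsMinIDF G f :=
  Nat.sInf_mem (s := {n | ∃ f : α → ℕ, IsIDF G f ∧ ∑ u, f u = n}) ⟨_, _, isIDF_const_one G, rfl⟩

theorem one_le_italianNumber [Nonempty α] : 1 ≤ italianNumber G := by
  obtain ⟨f, hf, hw⟩ := exists_isMinIDF G
  obtain ⟨u⟩ := ‹Nonempty α›
  rw [← hw, Nat.one_le_iff_ne_zero]
  intro h0
  have hf0 : ∀ w, f w = 0 := fun w => Finset.sum_eq_zero_iff.1 h0 w (mem_univ w)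
  simpa [hf0] using hf.2 u (hf0 u)

theorem exists_isDomSet_card_eq : ∃ D : Finset α, IsDomSet G ↑D ∧ D.card = dominationNumber G :=
  Nat.sInf_mem (s := {n | ∃ D : Finset α, IsDomSet G ↑D ∧ D.card = n})
    ⟨_, univ, fun u hu => absurd (mem_coe.2 (mem_univ u)) hu, rfl⟩

theorem dominationNumber_le {D : Finset α} (hD : IsDomSet G ↑D) : dominationNumber G ≤ D.card :=
  Nat.sInf_le ⟨D, hD, rfl⟩

theorem le_sum_ite_adj (f : α → ℕ) {u w : α} (h : G.Adj u w) :
    f w ≤ ∑ w', if G.Adj u w' then f w' else 0 := by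
  simpa [h] using single_le_sum (f := fun w' => if G.Adj u w' then f w' else 0)
    (fun _ _ => Nat.zero_le _) (mem_univ w)

theorem sum_add_ite_mem (c : ℕ) (D : Finset α) :
    ∑ x : α, (c + if x ∈ D then 1 else 0) = Fintype.card α * c + D.card := by
  simp [sum_add_distrib, mul_comm]

end Italian

section ExtendAt

variable {β : Type*} (v : β)

noncomputable def extendAt (g : {w // w ≠ v} → ℕ) (c : ℕ) (w : β) : ℕ :=
  if h : w = v then c else g ⟨w, h⟩

variable {v}

@[simp]
theorem extendAt_self (g : {w // w ≠ v} → ℕ) (c : ℕ) : extendAt v g c v = c :=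
  dif_pos rfl

@[simp]
theorem extendAt_coe (g : {w // w ≠ v} → ℕ) (c : ℕ) (u : {w // w ≠ v}) : extendAt v g c u = g u :=
  dif_neg u.2

end ExtendAt

section DeleteVertex

variable {β : Type*} [Fintype β] (H : SimpleGraph β) (v : β)

/-- The trace of an IDF of `G ∘_v H` on one copy of `H`, whose root may be dominated from
outside the copy. -/
def IsIDFExcept (f : β → ℕ) : Prop :=
  (∀ u, f u ≤ 2) ∧ ∀ u ≠ v, f u = 0 → 2 ≤ ∑ w, if H.Adj u w then f w else 0

variable {H v}

theorem isIDF_iff_isIDFExcept {f : β → ℕ} :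
    IsIDF H f ↔ IsIDFExcept H v f ∧ (f v = 0 → 2 ≤ ∑ w, if H.Adj v w then f w else 0) := by
  rw [isIDF_iff_sum_ite]
  refine ⟨fun h => ⟨⟨h.1, fun u _ => h.2 u⟩, h.2 v⟩, fun h => ⟨h.1.1, fun u hu => ?_⟩⟩
  by_cases huv : u = v
  · exact huv ▸ h.2 (huv ▸ hu)
  · exact h.1.2 u huv hu

theorem IsIDFExcept.of_deleteVertex {f : β → ℕ} (hf : IsIDF (deleteVertex H v) fun u => f u)
    (hv : f v ≤ 2) : IsIDFExcept H v f := by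
  rw [isIDF_iff_sum_ite] at hf
  refine ⟨fun u => if h : u = v then h ▸ hv else hf.1 ⟨u, h⟩, fun u hu h0 => ?_⟩
  rw [Fintype.sum_eq_add_sum_subtype_ne _ v]
  exact (hf.2 ⟨u, hu⟩ h0).trans (Nat.le_add_left _ _)

theorem IsIDFExcept.isIDF_deleteVertex {f : β → ℕ} (hf : IsIDFExcept H v f) (hv : f v = 0) :
    IsIDF (deleteVertex H v) fun u => f u := by
  rw [isIDF_iff_sum_ite]
  refine ⟨fun u => hf.1 u, fun u h0 => ?_⟩
  have := hf.2 u u.2 h0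
  rwa [Fintype.sum_eq_add_sum_subtype_ne _ v, hv, ite_self, zero_add] at this

theorem sum_extendAt (g : {w // w ≠ v} → ℕ) (c : ℕ) : ∑ w, extendAt v g c w = c + ∑ u, g u := by
  simp only [Fintype.sum_eq_add_sum_subtype_ne _ v, extendAt_self, extendAt_coe]

theorem isIDFExcept_extendAt {g : {w // w ≠ v} → ℕ} (hg : IsIDF (deleteVertex H v) g) {c : ℕ}
    (hc : c ≤ 2) : IsIDFExcept H v (extendAt v g c) :=
  .of_deleteVertex (by simpa only [extendAt_coe] using hg) (by rwa [extendAt_self])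

variable (H v) in
theorem italianNumber_le_deleteVertex_add_one :
    italianNumber H ≤ italianNumber (deleteVertex H v) + 1 := by
  obtain ⟨g, hg, hw⟩ := exists_isMinIDF (deleteVertex H v)
  have hIDF : IsIDF H (extendAt v g 1) :=
    isIDF_iff_isIDFExcept.2 ⟨isIDFExcept_extendAt hg (by norm_num), by simp⟩
  calc italianNumber H ≤ ∑ w, extendAt v g 1 w := italianNumber_le H hIDF
    _ = _ := by rw [sum_extendAt, hw, add_comm]

theorem IsIDFExcept.eq_zero_of_sum_lt {f : β → ℕ} (hf : IsIDFExcept H v f)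
    (hlt : ∑ w, f w < italianNumber H) :
    f v = 0 ∧ ∑ w, (if H.Adj v w then f w else 0) ≤ 1 := by
  by_contra! hc
  have hIDF : IsIDF H f := isIDF_iff_isIDFExcept.2 ⟨hf, hc⟩
  exact absurd (italianNumber_le H hIDF) (not_le.2 hlt)

theorem IsIDFExcept.italianNumber_sub_one_le {f : β → ℕ} (hf : IsIDFExcept H v f) :
    italianNumber H - 1 ≤ ∑ w, f w := by
  by_cases hlt : ∑ w, f w < italianNumber H
  · have h0 := (hf.eq_zero_of_sum_lt hlt).1
    have := italianNumber_le _ (hf.isIDF_deleteVertex h0)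
    have := italianNumber_le_deleteVertex_add_one H v
    rw [Fintype.sum_eq_add_sum_subtype_ne f v, h0]
    omega
  · omega

end DeleteVertex

section RootedProduct

variable {α β : Type*} [Fintype α] [Fintype β] {G : SimpleGraph α} {H : SimpleGraph β} {v : β}

theorem sum_ite_rootedProd_adj_root (F : α → β → ℕ) (x : α) :
    ∑ q, (if (rootedProd G H v).Adj (x, v) q then Function.uncurry F q else 0) =
      (∑ y, if H.Adj v y then F x y else 0) + ∑ x', if G.Adj x x' then F x' v else 0 := by
  rw [Fintype.sum_prod_type]
  calc _ = ∑ x', ∑ y, ((if x = x' ∧ H.Adj v y then F x' y else 0) +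
        if y = v ∧ G.Adj x x' then F x' y else 0) := by
        refine sum_congr rfl fun x' _ => sum_congr rfl fun y _ => ?_
        by_cases h : x = x' ∧ H.Adj v y <;> simp [rootedProd, h]
    _ = _ := by
        simp only [sum_add_distrib, ite_and]
        rw [sum_comm]
        simp

theorem sum_ite_rootedProd_adj_of_ne (F : α → β → ℕ) (x : α) {y : β} (hy : y ≠ v) :
    ∑ q, (if (rootedProd G H v).Adj (x, y) q then Function.uncurry F q else 0) =
      ∑ y', if H.Adj y y' then F x y' else 0 := by
  simp only [rootedProd, Fintype.sum_prod_type, hy, false_and, or_false, ite_and,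
    Function.uncurry_apply_pair]
  rw [Finset.sum_comm]
  simp

theorem isIDF_rootedProd_iff {F : α → β → ℕ} :
    IsIDF (rootedProd G H v) (Function.uncurry F) ↔ ∀ x, IsIDFExcept H v (F x) ∧
      (F x v = 0 → 2 ≤ (∑ y, if H.Adj v y then F x y else 0) +
        ∑ x', if G.Adj x x' then F x' v else 0) := by
  simp only [isIDF_iff_sum_ite, Prod.forall, Function.uncurry_apply_pair]
  constructor
  · rintro ⟨hle, hz⟩ x
    refine ⟨⟨hle x, fun y hy h0 => ?_⟩, fun h0 => ?_⟩
    · simpa only [sum_ite_rootedProd_adj_of_ne F x hy] using hz x y h0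
    · simpa only [sum_ite_rootedProd_adj_root] using hz x v h0
  · refine fun h => ⟨fun x => (h x).1.1, fun x y h0 => ?_⟩
    by_cases hy : y = v
    · subst hy
      simpa only [sum_ite_rootedProd_adj_root] using (h x).2 h0
    · simpa only [sum_ite_rootedProd_adj_of_ne F x hy] using (h x).1.2 y hy h0

end RootedProduct

section HeavyCopies

variable {α β : Type*} [Fintype α] [Fintype β] {G : SimpleGraph α} {H : SimpleGraph β} {v : β}
  {F : α → β → ℕ}

variable (H) in
noncomputable def heavyCopies (F : α → β → ℕ) : Finset α :=
  univ.filter fun x => italianNumber H ≤ ∑ y, F x y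

theorem IsIDF.mem_heavyCopies_of_ne_zero (hf : IsIDF (rootedProd G H v) (Function.uncurry F))
    {x : α} (hx : F x v ≠ 0) : x ∈ heavyCopies H F := by
  by_contra hlt
  simp only [heavyCopies, mem_filter, mem_univ, true_and, not_le] at hlt
  exact hx ((isIDF_rootedProd_iff.1 hf x).1.eq_zero_of_sum_lt hlt).1

theorem IsIDF.eq_zero_of_notMem_heavyCopies
    (hf : IsIDF (rootedProd G H v) (Function.uncurry F)) {x : α} (hx : x ∉ heavyCopies H F) :
    F x v = 0 ∧ ∑ y, (if H.Adj v y then F x y else 0) ≤ 1 :=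
  (isIDF_rootedProd_iff.1 hf x).1.eq_zero_of_sum_lt (by simpa [heavyCopies] using hx)

/-- A light copy leaves its root to be dominated from outside, by a root of positive value. -/
theorem IsIDF.isDomSet_heavyCopies (hf : IsIDF (rootedProd G H v) (Function.uncurry F)) :
    IsDomSet G ↑(heavyCopies H F) := by
  intro x hx
  obtain ⟨h0, hint⟩ := hf.eq_zero_of_notMem_heavyCopies (mem_coe.not.1 hx)
  have hext := (isIDF_rootedProd_iff.1 hf x).2 h0
  obtain ⟨x', -, hx'⟩ := exists_ne_zero_of_sum_ne_zero
    (by omega : ∑ x', (if G.Adj x x' then F x' v else 0) ≠ 0)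
  have hadj : G.Adj x x' := by_contra fun h => hx' (if_neg h)
  rw [if_pos hadj] at hx'
  exact ⟨x', mem_coe.2 (hf.mem_heavyCopies_of_ne_zero hx'), hadj⟩

theorem IsIDF.add_ite_mem_heavyCopies_le (hf : IsIDF (rootedProd G H v) (Function.uncurry F))
    (x : α) : italianNumber H - 1 + (if x ∈ heavyCopies H F then 1 else 0) ≤ ∑ y, F x y := by
  have : Nonempty β := ⟨v⟩
  have := one_le_italianNumber H
  split_ifs with hx
  · have := (mem_filter.1 hx).2
    omega
  · exact (isIDF_rootedProd_iff.1 hf x).1.italianNumber_sub_one_le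

theorem IsIDF.card_mul_add_card_heavyCopies_le
    (hf : IsIDF (rootedProd G H v) (Function.uncurry F)) :
    Fintype.card α * (italianNumber H - 1) + (heavyCopies H F).card ≤
      ∑ q, Function.uncurry F q := by
  rw [← sum_add_ite_mem, Fintype.sum_prod_type]
  exact sum_le_sum fun x _ => hf.add_ite_mem_heavyCopies_le x

theorem card_mul_add_dominationNumber_le_italianNumber_rootedProd :
    Fintype.card α * (italianNumber H - 1) + dominationNumber G ≤
      italianNumber (rootedProd G H v) := by
  obtain ⟨f, hf, hw⟩ := exists_isMinIDF (rootedProd G H v)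
  rw [← Function.uncurry_curry f] at hf hw
  have := hf.card_mul_add_card_heavyCopies_le
  have := dominationNumber_le G hf.isDomSet_heavyCopies
  omega

theorem IsIDF.card_heavyCopies_eq_and_sum_eq
    (hf : IsIDF (rootedProd G H v) (Function.uncurry F))
    (hw : ∑ q, Function.uncurry F q = Fintype.card α * (italianNumber H - 1) + dominationNumber G) :
    (heavyCopies H F).card = dominationNumber G ∧
      ∀ x ∈ heavyCopies H F, ∑ y, F x y = italianNumber H := by
  have hle := hf.card_mul_add_card_heavyCopies_le
  have hcard : (heavyCopies H F).card = dominationNumber G := by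
    have := dominationNumber_le G hf.isDomSet_heavyCopies
    omega
  refine ⟨hcard, fun x hx => ?_⟩
  have hsum : ∑ x, (italianNumber H - 1 + if x ∈ heavyCopies H F then 1 else 0) =
      ∑ x, ∑ y, F x y := by
    rw [sum_add_ite_mem, hcard, ← hw, Fintype.sum_prod_type]
    rfl
  have heq := (sum_eq_sum_iff_of_le fun x _ => hf.add_ite_mem_heavyCopies_le x).1 hsum x
    (mem_univ x)
  have hk := (mem_filter.1 hx).2
  have : Nonempty β := ⟨v⟩
  have := one_le_italianNumber H
  rw [if_pos hx] at heq
  omega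

theorem IsIDF.isMinIDF_of_notMem_heavyCopies
    (hf : IsIDF (rootedProd G H v) (Function.uncurry F)) {x : α} (hx : x ∉ heavyCopies H F) :
    italianNumber (deleteVertex H v) = italianNumber H - 1 ∧
      IsMinIDF (deleteVertex H v) fun u => F x u := by
  have h0 := (hf.eq_zero_of_notMem_heavyCopies hx).1
  have hIDF := (isIDF_rootedProd_iff.1 hf x).1.isIDF_deleteVertex h0
  have hle : italianNumber _ ≤ ∑ u : {w // w ≠ v}, F x u := italianNumber_le _ hIDF
  have hlt : ∑ y, F x y < italianNumber H := by simpa [heavyCopies] using hx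
  rw [Fintype.sum_eq_add_sum_subtype_ne _ v, h0, zero_add] at hlt
  have := italianNumber_le_deleteVertex_add_one H v
  exact ⟨by omega, hIDF, show ∑ u : {w // w ≠ v}, F x u = _ by omega⟩

theorem IsIDF.isIDF_indicator_heavyCopies (hf : IsIDF (rootedProd G H v) (Function.uncurry F))
    (hint : ∀ x ∉ heavyCopies H F, ∀ y, H.Adj v y → F x y = 0) (hroot : ∀ x, F x v ≠ 2) :
    IsIDF G fun x => if x ∈ heavyCopies H F then 1 else 0 := by
  have hle : ∀ x, F x v ≤ if x ∈ heavyCopies H F then 1 else 0 := fun x => by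
    by_cases h0 : F x v = 0
    · rw [h0]
      exact Nat.zero_le _
    · have := (isIDF_rootedProd_iff.1 hf x).1.1 v
      have := hroot x
      rw [if_pos (hf.mem_heavyCopies_of_ne_zero h0)]
      omega
  rw [isIDF_iff_sum_ite]
  refine ⟨fun x => by split_ifs <;> norm_num, fun x hx0 => ?_⟩
  have hx : x ∉ heavyCopies H F := by simpa using hx0
  have hint0 : ∑ y, (if H.Adj v y then F x y else 0) = 0 :=
    sum_eq_zero fun y _ => by split_ifs with h; exacts [hint x hx y h, rfl]
  have hext := (isIDF_rootedProd_iff.1 hf x).2 (hf.eq_zero_of_notMem_heavyCopies hx).1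
  calc 2 ≤ ∑ x', if G.Adj x x' then F x' v else 0 := by omega
    _ ≤ _ := sum_le_sum fun x' _ => by
      by_cases h : G.Adj x x'
      · simpa only [if_pos h] using hle x'
      · simp only [if_neg h, le_rfl]

end HeavyCopies

section Characterization

variable {α β : Type*} [Fintype α] [Fintype β] {G : SimpleGraph α} {H : SimpleGraph β} {v : β}

theorem italianNumber_deleteVertex_eq_and_of_italianNumber_rootedProd_eq
    (hGI : dominationNumber G < italianNumber G)
    (heq : italianNumber (rootedProd G H v) =
      Fintype.card α * (italianNumber H - 1) + dominationNumber G) :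
    italianNumber (deleteVertex H v) = italianNumber H - 1 ∧
      ((∃ g : {w : β // w ≠ v} → ℕ, IsMinIDF (deleteVertex H v) g ∧
          ∃ y : β, ∃ hy : H.Adj v y, 0 < g ⟨y, (H.ne_of_adj hy).symm⟩) ∨
        (∃ h : β → ℕ, IsMinIDF H h ∧ h v = 2)) := by
  obtain ⟨f, hf, hw⟩ := exists_isMinIDF (rootedProd G H v)
  rw [← Function.uncurry_curry f] at hf hw
  set F := Function.curry f
  obtain ⟨hcard, hheavy⟩ := hf.card_heavyCopies_eq_and_sum_eq (hw.trans heq)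
  obtain ⟨x₀, hx₀⟩ : ∃ x₀, x₀ ∉ heavyCopies H F := by
    by_contra! h
    rw [eq_univ_iff_forall.2 h, card_univ] at hcard
    have := italianNumber_le_card G
    omega
  refine ⟨(hf.isMinIDF_of_notMem_heavyCopies hx₀).1, ?_⟩
  by_cases hi : ∃ x ∉ heavyCopies H F, ∃ y, H.Adj v y ∧ F x y ≠ 0
  · obtain ⟨x, hx, y, hy, hpos⟩ := hi
    exact .inl ⟨_, (hf.isMinIDF_of_notMem_heavyCopies hx).2, y, hy, Nat.pos_of_ne_zero hpos⟩
  by_cases hii : ∃ x, F x v = 2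
  · obtain ⟨x, hx⟩ := hii
    have hIDF : IsIDF H (F x) :=
      isIDF_iff_isIDFExcept.2 ⟨(isIDF_rootedProd_iff.1 hf x).1, fun h0 => by omega⟩
    exact .inr ⟨F x, ⟨hIDF, hheavy x (hf.mem_heavyCopies_of_ne_zero (by omega))⟩, hx⟩
  push Not at hi hii
  have := italianNumber_le G (hf.isIDF_indicator_heavyCopies hi hii)
  rw [sum_boole, Nat.cast_id, filter_mem_eq_inter, univ_inter, hcard] at this
  omega

theorem italianNumber_rootedProd_le_of_isMinIDF_deleteVertex
    (hdel : italianNumber (deleteVertex H v) = italianNumber H - 1)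
    {g : {w : β // w ≠ v} → ℕ} (hg : IsMinIDF (deleteVertex H v) g) {y₀ : β} (hy₀ : H.Adj v y₀)
    (hpos : 0 < g ⟨y₀, (H.ne_of_adj hy₀).symm⟩) :
    italianNumber (rootedProd G H v) ≤
      Fintype.card α * (italianNumber H - 1) + dominationNumber G := by
  obtain ⟨D, hD, hDcard⟩ := exists_isDomSet_card_eq G
  set F : α → β → ℕ := fun x => extendAt v g (if x ∈ D then 1 else 0)
  have hIDF : IsIDF (rootedProd G H v) (Function.uncurry F) := by
    refine isIDF_rootedProd_iff.2 fun x =>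
      ⟨isIDFExcept_extendAt hg.1 (by split_ifs <;> norm_num), fun h0 => ?_⟩
    have hx : x ∉ D := by simpa [F] using h0
    obtain ⟨x', hx', hxx'⟩ := hD x hx
    have hint : F x y₀ ≤ ∑ y, if H.Adj v y then F x y else 0 := le_sum_ite_adj H (F x) hy₀
    have hext : F x' v ≤ ∑ x'', if G.Adj x x'' then F x'' v else 0 :=
      le_sum_ite_adj G (fun x'' => F x'' v) hxx'
    have hy₀F : F x y₀ = g ⟨y₀, (H.ne_of_adj hy₀).symm⟩ := extendAt_coe g _ ⟨y₀, _⟩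
    have hx'F : F x' v = 1 := by simp [F, mem_coe.1 hx']
    omega
  calc italianNumber _ ≤ ∑ q, Function.uncurry F q := italianNumber_le _ hIDF
    _ = ∑ x, (italianNumber H - 1 + if x ∈ D then 1 else 0) := by
      rw [Fintype.sum_prod_type]
      exact sum_congr rfl fun x _ => by
        show ∑ y, F x y = _
        rw [sum_extendAt, hg.2, hdel, add_comm]
    _ = _ := by rw [sum_add_ite_mem, hDcard]


theorem italianNumber_rootedProd_le_of_isMinIDF_eq_two
    (hdel : italianNumber (deleteVertex H v) = italianNumber H - 1)
    {h : β → ℕ} (hh : IsMinIDF H h) (hv : h v = 2) :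
    italianNumber (rootedProd G H v) ≤
      Fintype.card α * (italianNumber H - 1) + dominationNumber G := by
  obtain ⟨D, hD, hDcard⟩ := exists_isDomSet_card_eq G
  obtain ⟨g, hg⟩ := exists_isMinIDF (deleteVertex H v)
  set F : α → β → ℕ := fun x => if x ∈ D then h else extendAt v g 0
  have hIDF : IsIDF (rootedProd G H v) (Function.uncurry F) := by
    refine isIDF_rootedProd_iff.2 fun x => ?_
    by_cases hx : x ∈ D
    · simp only [F, if_pos hx]
      exact ⟨(isIDF_iff_isIDFExcept.1 hh.1).1, fun h0 => by omega⟩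
    · refine ⟨by simpa only [F, if_neg hx] using isIDFExcept_extendAt hg.1 zero_le_two, fun _ => ?_⟩
      obtain ⟨x', hx', hxx'⟩ := hD x hx
      have hext : F x' v ≤ ∑ x'', if G.Adj x x'' then F x'' v else 0 :=
        le_sum_ite_adj G (fun x'' => F x'' v) hxx'
      have hx'F : F x' v = 2 := by simp [F, mem_coe.1 hx', hv]
      omega
  have : Nonempty β := ⟨v⟩
  have := one_le_italianNumber H
  calc italianNumber _ ≤ ∑ q, Function.uncurry F q := italianNumber_le _ hIDF
    _ = ∑ x, (italianNumber H - 1 + if x ∈ D then 1 else 0) := by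
      rw [Fintype.sum_prod_type]
      refine sum_congr rfl fun x _ => show ∑ y, F x y = _ from ?_
      by_cases hx : x ∈ D
      · simp only [F, if_pos hx, hh.2]
        omega
      · simp only [F, if_neg hx, sum_extendAt, hg.2, hdel, zero_add, add_zero]
    _ = _ := by rw [sum_add_ite_mem, hDcard]

end Characterization

theorem stmt16_general {α β : Type*} [Fintype α] [Fintype β]
    (G : SimpleGraph α)
    (hGI : dominationNumber G < italianNumber G)
    (H : SimpleGraph β) (v : β) :
    italianNumber (rootedProd G H v) =
        Fintype.card α * (italianNumber H - 1) + dominationNumber G ↔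
      (italianNumber (deleteVertex H v) = italianNumber H - 1 ∧
        ((∃ g : {w : β // w ≠ v} → ℕ, IsMinIDF (deleteVertex H v) g ∧
            ∃ y : β, ∃ hy : H.Adj v y, 0 < g ⟨y, (H.ne_of_adj hy).symm⟩) ∨
          (∃ h : β → ℕ, IsMinIDF H h ∧ h v = 2))) := by
  refine ⟨italianNumber_deleteVertex_eq_and_of_italianNumber_rootedProd_eq hGI, ?_⟩
  rintro ⟨hdel, ⟨g, hg, y, hy, hpos⟩ | ⟨h, hh, hv⟩⟩
  · exact le_antisymm (italianNumber_rootedProd_le_of_isMinIDF_deleteVertex hdel hg hy hpos)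
      card_mul_add_dominationNumber_le_italianNumber_rootedProd
  · exact le_antisymm (italianNumber_rootedProd_le_of_isMinIDF_eq_two hdel hh hv)
      card_mul_add_dominationNumber_le_italianNumber_rootedProd

/-- Theorem: for G of maximum degree at least 2 with γ_I(G) > γ(G),
γ_I(G∘_v H) = n(G)(γ_I(H)−1)+γ(G) iff γ_I(H−{v}) = γ_I(H)−1 and ((i) some
γ_I(H−{v})-function g has g(y) > 0 for some neighbour y of v in H, or (ii) some
γ_I(H)-function h has h(v) = 2). -/
theorem stmt16 {α β : Type*} [Fintype α] [Nonempty α] [Fintype β]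
    (G : SimpleGraph α) (hG : ∃ u : α, 2 ≤ deg G u)
    (hGI : dominationNumber G < italianNumber G)
    (H : SimpleGraph β) (v : β) :
    italianNumber (rootedProd G H v) =
        Fintype.card α * (italianNumber H - 1) + dominationNumber G ↔
      (italianNumber (deleteVertex H v) = italianNumber H - 1 ∧
        ((∃ g : {w : β // w ≠ v} → ℕ, IsMinIDF (deleteVertex H v) g ∧
            ∃ y : β, ∃ hy : H.Adj v y, 0 < g ⟨y, (H.ne_of_adj hy).symm⟩) ∨
          (∃ h : β → ℕ, IsMinIDF H h ∧ h v = 2))) :=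
  stmt16_general G hGI H v
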